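/- arXiv:1703.03846 — 2 statements merged into one kernel-verified Lean document; each statement's English description precedes it below -/
import Mathlib

section
/- Let 0 < α < 1, 0 < δ < 1, B > 0, and set r = δ^{1/(1-α)} and x*_i = B(1-r)·r^i for i ∈ ℕ. Then for every sequence x : ℕ → ℝ with x_i ≥ 0 for all i and ∑_{i≥0} x_i ≤ B (the series being summable), one has ∑_{i≥0} (x_i)^α · δ^i ≤ ∑_{i≥0} (x*_i)^α · δ^i; i.e., the geometric allocation x* is a global maximizer of the discounted power-utility objective over nonnegative sequences whose total mass is at most B. -/
/-!
Hölder's inequality with exponents `1/α` and `1/(1-α)` bounds the objective by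
`(∑ xᵢ)^α (∑ δ^(i/(1-α)))^(1-α) = (∑ xᵢ)^α (1-r)^(α-1) ≤ B^α (1-r)^(α-1)`.
Since `r^α δ = r`, the objective at `x*` is the geometric series `(B(1-r))^α ∑ rⁱ`,
which attains this bound.
-/

open Real

theorem tsum_rpow_mul_le_tsum_rpow_mul_tsum_rpow {ι : Type*} {α : ℝ} (hα0 : 0 < α) (hα1 : α < 1)
    {x w : ι → ℝ} (hx : ∀ i, 0 ≤ x i) (hw : ∀ i, 0 ≤ w i) (hxs : Summable x)
    (hws : Summable fun i => w i ^ (1 - α)⁻¹) :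
    ∑' i, x i ^ α * w i ≤ (∑' i, x i) ^ α * (∑' i, w i ^ (1 - α)⁻¹) ^ (1 - α) := by
  have hxα : ∀ i, (x i ^ α) ^ α⁻¹ = x i := fun i => rpow_rpow_inv (hx i) hα0.ne'
  have holder := inner_le_Lp_mul_Lq_tsum_of_nonneg (HolderConjugate.inv_one_sub_inv hα0 hα1)
    (fun i => rpow_nonneg (hx i) α) hw (by simpa only [hxα] using hxs) hws
  simpa only [hxα, one_div, inv_inv] using holder

theorem rpow_one_div_one_sub_rpow_mul_self {δ α : ℝ} (hδ : 0 < δ) (hα : α ≠ 1) :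
    (δ ^ (1 / (1 - α))) ^ α * δ = δ ^ (1 / (1 - α)) := by
  have h1α : 1 - α ≠ 0 := sub_ne_zero.mpr hα.symm
  rw [← rpow_mul hδ.le, ← rpow_add_one hδ.ne']
  congr 1
  field_simp
  ring

theorem tsum_geometric_rpow_mul_pow {c r α δ : ℝ} (hc : 0 ≤ c) (hr0 : 0 ≤ r) (hr1 : r < 1)
    (hrδ : r ^ α * δ = r) :
    ∑' i : ℕ, (c * r ^ i) ^ α * δ ^ i = c ^ α * (1 - r)⁻¹ := by
  have hterm : ∀ i : ℕ, (c * r ^ i) ^ α * δ ^ i = c ^ α * r ^ i := fun i => by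
    rw [mul_rpow hc (by positivity), mul_assoc, ← rpow_natCast, ← rpow_mul hr0, mul_comm _ α,
      rpow_mul hr0, rpow_natCast, rpow_natCast, ← mul_pow, hrδ]
  rw [tsum_congr hterm, tsum_mul_left, tsum_geometric_of_lt_one hr0 hr1]

theorem rpow_mul_inv_rpow_one_sub {B s α : ℝ} (hB : 0 ≤ B) (hs : 0 < s) :
    B ^ α * s⁻¹ ^ (1 - α) = (B * s) ^ α * s⁻¹ := by
  rw [mul_rpow hB hs.le, inv_rpow hs.le, ← rpow_neg hs.le, mul_assoc, ← rpow_neg_one s,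
    ← rpow_add hs]
  ring_nf

theorem geometric_allocation_optimal_general
    (α δ B : ℝ) (hα0 : 0 < α) (hα1 : α < 1) (hδ0 : 0 < δ) (hδ1 : δ < 1)
    (r : ℝ) (hr : r = δ ^ (1 / (1 - α)))
    (x : ℕ → ℝ) (hx : ∀ i, 0 ≤ x i) (hsum : Summable x)
    (hle : ∑' i, x i ≤ B) :
    ∑' i, (x i) ^ α * δ ^ i ≤ ∑' i, (B * (1 - r) * r ^ i) ^ α * δ ^ i := by
  have hr0 : 0 < r := hr ▸ rpow_pos_of_pos hδ0 _
  have hr1 : r < 1 := hr ▸ rpow_lt_one hδ0.le hδ1 (by simpa using hα1)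
  have hδr : ∀ i : ℕ, (δ ^ i) ^ (1 - α)⁻¹ = r ^ i := fun i => by
    rw [← rpow_pow_comm hδ0.le, hr, one_div]
  have hB : 0 ≤ B := (tsum_nonneg hx).trans hle
  calc ∑' i, x i ^ α * δ ^ i
      ≤ (∑' i, x i) ^ α * (∑' i : ℕ, (δ ^ i) ^ (1 - α)⁻¹) ^ (1 - α) :=
        tsum_rpow_mul_le_tsum_rpow_mul_tsum_rpow hα0 hα1 hx (fun i => by positivity) hsum
          (by simpa only [hδr] using summable_geometric_of_lt_one hr0.le hr1)
    _ = (∑' i, x i) ^ α * (1 - r)⁻¹ ^ (1 - α) := by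
        simp only [hδr, tsum_geometric_of_lt_one hr0.le hr1]
    _ ≤ B ^ α * (1 - r)⁻¹ ^ (1 - α) := by
        gcongr
        exact tsum_nonneg hx
    _ = (B * (1 - r)) ^ α * (1 - r)⁻¹ := rpow_mul_inv_rpow_one_sub hB (by linarith)
    _ = ∑' i, (B * (1 - r) * r ^ i) ^ α * δ ^ i :=
        (tsum_geometric_rpow_mul_pow (mul_nonneg hB (by linarith)) hr0.le hr1
          (hr ▸ rpow_one_div_one_sub_rpow_mul_self hδ0 hα1.ne)).symm

/-- The geometric allocation `x*_i = B(1-r) r^i`, with `r = δ^(1/(1-α))`, is a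
global maximizer of the discounted power-utility objective
`∑ (x_i)^α δ^i` over nonnegative sequences with total mass at most `B`. -/
theorem geometric_allocation_optimal
    (α δ B : ℝ) (hα0 : 0 < α) (hα1 : α < 1) (hδ0 : 0 < δ) (hδ1 : δ < 1)
    (hB : 0 < B) (r : ℝ) (hr : r = δ ^ (1 / (1 - α)))
    (x : ℕ → ℝ) (hx : ∀ i, 0 ≤ x i) (hsum : Summable x)
    (hle : ∑' i, x i ≤ B) :
    ∑' i, (x i) ^ α * δ ^ i ≤ ∑' i, (B * (1 - r) * r ^ i) ^ α * δ ^ i :=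
  geometric_allocation_optimal_general α δ B hα0 hα1 hδ0 hδ1 r hr x hx hsum hle
end

section
/- Let 0 < α < 1, 0 < δ < 1, B > 0, n ≥ 1, and set r = δ^{1/(1-α)}. Define y* ∈ ℝⁿ by y*_i = B·(1-r)/(1-rⁿ)·r^i for 0 ≤ i ≤ n-1. Then for every y ∈ ℝⁿ with y_i ≥ 0 for all i and ∑_{i=0}^{n-1} y_i ≤ B, one has ∑_{i=0}^{n-1} (y_i)^α δ^i ≤ ∑_{i=0}^{n-1} (y*_i)^α δ^i; i.e., y* maximizes the truncated discounted power-utility objective over the simplex-constrained set. -/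
/-- Tangent-line inequality for the concave function `x ↦ x ^ α`, `0 < α < 1`. -/
lemma rpow_tangent_line (α : ℝ) (hα0 : 0 < α) (hα1 : α < 1)
    (a b : ℝ) (ha : 0 ≤ a) (hb : 0 < b) :
    a ^ α ≤ b ^ α + α * b ^ (α - 1) * (a - b) := by
  have hyoung : a ^ α * b ^ (1 - α) ≤ α * a + (1 - α) * b :=
    Real.geom_mean_le_arith_mean2_weighted hα0.le (by linarith) ha hb.le (by ring)
  have hbpow : 0 < b ^ (α - 1) := Real.rpow_pos_of_pos hb _
  have h1 : b ^ (1 - α) * b ^ (α - 1) = 1 := by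
    rw [← Real.rpow_add hb]; norm_num
  have h2 : b * b ^ (α - 1) = b ^ α := by
    nth_rewrite 1 [← Real.rpow_one b]
    rw [← Real.rpow_add hb]; norm_num
  have key : a ^ α ≤ α * a * b ^ (α - 1) + (1 - α) * b ^ α := by
    calc a ^ α = a ^ α * (b ^ (1 - α) * b ^ (α - 1)) := by rw [h1, mul_one]
      _ = a ^ α * b ^ (1 - α) * b ^ (α - 1) := by ring
      _ ≤ (α * a + (1 - α) * b) * b ^ (α - 1) :=
          mul_le_mul_of_nonneg_right hyoung hbpow.le
      _ = α * a * b ^ (α - 1) + (1 - α) * (b * b ^ (α - 1)) := by ring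
      _ = α * a * b ^ (α - 1) + (1 - α) * b ^ α := by rw [h2]
  calc a ^ α ≤ α * a * b ^ (α - 1) + (1 - α) * b ^ α := key
    _ = b ^ α + α * b ^ (α - 1) * (a - b) + α * ((b * b ^ (α - 1)) - b ^ α) := by ring
    _ = b ^ α + α * b ^ (α - 1) * (a - b) := by rw [h2]; ring

/-- The truncated geometric allocation `y*_i = B (1-r)/(1-r^n) r^i`, with
`r = δ^(1/(1-α))`, maximizes the truncated discounted power-utility objective
`∑_{i<n} (y_i)^α δ^i` over nonnegative `y ∈ ℝⁿ` with `∑_{i<n} y_i ≤ B`. -/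
theorem truncated_geometric_allocation_optimal
    (α δ B : ℝ) (n : ℕ) (hn : 1 ≤ n)
    (hα0 : 0 < α) (hα1 : α < 1) (hδ0 : 0 < δ) (hδ1 : δ < 1) (hB : 0 < B)
    (r : ℝ) (hr : r = δ ^ (1 / (1 - α)))
    (y : Fin n → ℝ) (hy : ∀ i, 0 ≤ y i) (hsum : ∑ i, y i ≤ B) :
    ∑ i : Fin n, (y i) ^ α * δ ^ (i : ℕ) ≤
      ∑ i : Fin n, (B * (1 - r) / (1 - r ^ n) * r ^ (i : ℕ)) ^ α * δ ^ (i : ℕ) := by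
  have h1α : 0 < 1 - α := by linarith
  have hr0 : 0 < r := hr ▸ Real.rpow_pos_of_pos hδ0 _
  have hr1 : r < 1 := by
    rw [hr]; exact Real.rpow_lt_one hδ0.le hδ1 (by positivity)
  have hrn : 0 < 1 - r ^ n := by
    have := pow_lt_one₀ hr0.le hr1 (by omega : n ≠ 0)
    linarith
  -- key scalar identities
  have hra : r ^ α * δ = r := by
    rw [hr, ← Real.rpow_mul hδ0.le, ← Real.rpow_add_one hδ0.ne']
    congr 1
    field_simp
    ring
  have hrb : r ^ (α - 1) * δ = 1 := by
    rw [hr, ← Real.rpow_mul hδ0.le, ← Real.rpow_add_one hδ0.ne']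
    have he : 1 / (1 - α) * (α - 1) + 1 = (0:ℝ) := by field_simp; ring
    rw [he, Real.rpow_zero]
  haveI : NeZero n := ⟨by omega⟩
  set S : ℝ := ∑ i : Fin n, r ^ (i : ℕ) with hS
  have hSpos : 0 < S :=
    Finset.sum_pos (fun i _ => pow_pos hr0 _) Finset.univ_nonempty
  set K : ℝ := B * (1 - r) / (1 - r ^ n) with hKdef
  have hSval : S * (1 - r) = 1 - r ^ n := by
    have := geom_sum_mul r n
    rw [hS, Fin.sum_univ_eq_sum_range]
    linarith [this]
  have hKpos : 0 < K := by
    rw [hKdef]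
    exact div_pos (mul_pos hB (by linarith)) hrn
  have hKS : K * S = B := by
    rw [hKdef, div_mul_eq_mul_div, div_eq_iff hrn.ne']
    linear_combination B * hSval
  have hc : 0 < α * K ^ (α - 1) := by positivity
  -- pointwise tangent-line inequality with constant gradient coefficient
  have hpt : ∀ i : Fin n,
      (y i) ^ α * δ ^ (i : ℕ) ≤
        (K * r ^ (i : ℕ)) ^ α * δ ^ (i : ℕ)
          + α * K ^ (α - 1) * (y i - K * r ^ (i : ℕ)) := by
    intro i
    have hb : 0 < K * r ^ (i : ℕ) := by positivity
    have htan := rpow_tangent_line α hα0 hα1 (y i) (K * r ^ (i : ℕ)) (hy i) hb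
    have hδi : (0:ℝ) < δ ^ (i : ℕ) := pow_pos hδ0 _
    have hmul := mul_le_mul_of_nonneg_right htan hδi.le
    have hgrad : (K * r ^ (i : ℕ)) ^ (α - 1) * δ ^ (i : ℕ) = K ^ (α - 1) := by
      rw [Real.mul_rpow hKpos.le (by positivity), ← Real.rpow_natCast r i,
        ← Real.rpow_mul hr0.le, mul_comm (i : ℝ) (α - 1), Real.rpow_mul hr0.le,
        Real.rpow_natCast, mul_assoc, ← mul_pow, hrb, one_pow, mul_one]
    calc (y i) ^ α * δ ^ (i : ℕ)
        ≤ ((K * r ^ (i : ℕ)) ^ α + α * (K * r ^ (i : ℕ)) ^ (α - 1) * (y i - K * r ^ (i : ℕ)))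
            * δ ^ (i : ℕ) := hmul
      _ = (K * r ^ (i : ℕ)) ^ α * δ ^ (i : ℕ)
            + α * ((K * r ^ (i : ℕ)) ^ (α - 1) * δ ^ (i : ℕ)) * (y i - K * r ^ (i : ℕ)) := by
          ring
      _ = _ := by rw [hgrad]
  calc ∑ i : Fin n, (y i) ^ α * δ ^ (i : ℕ)
      ≤ ∑ i : Fin n, ((K * r ^ (i : ℕ)) ^ α * δ ^ (i : ℕ)
          + α * K ^ (α - 1) * (y i - K * r ^ (i : ℕ))) :=
        Finset.sum_le_sum (fun i _ => hpt i)
    _ = ∑ i : Fin n, (K * r ^ (i : ℕ)) ^ α * δ ^ (i : ℕ)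
          + α * K ^ (α - 1) * ((∑ i, y i) - K * S) := by
        rw [Finset.sum_add_distrib, ← Finset.mul_sum, Finset.sum_sub_distrib,
          ← Finset.mul_sum, hS]
    _ ≤ ∑ i : Fin n, (K * r ^ (i : ℕ)) ^ α * δ ^ (i : ℕ) := by
        have hle : (∑ i, y i) - K * S ≤ 0 := by rw [hKS]; linarith
        nlinarith [hc, hle]
    _ = _ := by rw [hKdef]
end
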